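/- arXiv:math/0306088 — 4 statements merged into one kernel-verified Lean document; each statement's English description precedes it below -/
import Mathlib

section
/- For every t-shape T there exists an integer m ≥ 0 such that the m-th iterated Magnus derivative D^m(T) is a power shape t^q for some q ∈ ℤ. Consequently the complexity of every t-shape is well defined. -/
/-!
A *t-shape* is a finite cyclic word in the symbols `t` and `t⁻¹`.  We represent a
t-shape by a list of Booleans (`true` = `t` = `+1`, `false` = `t⁻¹` = `−1`),
regarded up to cyclic rotation (`ShapeRotEquiv`).
-/

/-- The `i`-th entry of a list, read cyclically. -/
def cyclicGet (l : List Bool) (i : ℕ) : Bool :=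
  l.getD (i % l.length) true

/-- Two lists represent the same cyclic word iff one is a rotation of the other. -/
def ShapeRotEquiv (l l' : List Bool) : Prop :=
  ∃ n : ℕ, l.rotate n = l'

/-- The entry at (cyclic) position `i` is deleted by the Magnus derivative:
either it is a `+1` immediately followed (cyclically) by a `−1`, or it is a `−1`
immediately preceded (cyclically) by a `+1`.  (Such occurrences of the subword
`t t⁻¹` are automatically pairwise disjoint.) -/
def magnusDeleted (l : List Bool) (i : ℕ) : Bool :=
  (cyclicGet l i && !cyclicGet l (i + 1)) ||
    (!cyclicGet l i && cyclicGet l (i + l.length - 1))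

/-- The Magnus derivative of a t-shape: simultaneously delete all cyclic
occurrences of the subword `t t⁻¹` and close up. -/
def magnusD (l : List Bool) : List Bool :=
  ((List.range l.length).filter (fun i => !magnusDeleted l i)).map (cyclicGet l)

/-- A power shape `t^q`, `q ∈ ℤ`: all entries equal (or the empty shape). -/
def IsPowerShape (l : List Bool) : Prop :=
  (∀ x ∈ l, x = true) ∨ (∀ x ∈ l, x = false)

/-- The complexity of a t-shape: the least `m ≥ 0` such that the `m`-th iterated
Magnus derivative is a power shape. -/
noncomputable def shapeComplexity (l : List Bool) : ℕ :=
  sInf {m : ℕ | IsPowerShape (magnusD^[m] l)}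

/-!
A shape that is not a power contains both letters, so walking cyclically from a `t` to a
`t⁻¹` one meets a cyclic subword `t t⁻¹`: the derivative is strictly shorter, and iterating
it terminates at a power shape. The deletion rule at a position only looks at the cyclic
neighbourhood of that position, so rotating the shape rotates its derivative; hence the
iterated derivatives of rotated shapes are rotations of each other, and being a power
shape only depends on the letters present.
-/

namespace List

theorem IsRotated.filter {α : Type*} {l l' : List α} (h : l ~r l') (p : α → Bool) :
    l.filter p ~r l'.filter p := by
  obtain ⟨n, rfl⟩ := h
  calc l.filter p = (l.take (n % l.length) ++ l.drop (n % l.length)).filter p := by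
        rw [take_append_drop]
    _ ~r (l.drop (n % l.length) ++ l.take (n % l.length)).filter p := by
        simpa only [filter_append] using isRotated_append
    _ = (l.rotate n).filter p := by rw [rotate_eq_drop_append_take_mod]

theorem map_range_add_mod (n k : ℕ) :
    (range n).map (fun i => (i + k) % n) = (range n).rotate k :=
  ext_getElem (by simp) fun i _ _ => by simp

end List

theorem Nat.exists_and_not_succ_of_le {P : ℕ → Prop} {a b : ℕ} (hab : a ≤ b) (ha : P a)
    (hb : ¬ P b) : ∃ i, P i ∧ ¬ P (i + 1) := by
  by_contra! hstep
  exact hb (Nat.le_induction ha (fun i _ => hstep i) b hab)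

open List

theorem cyclicGet_periodic (l : List Bool) : Function.Periodic (cyclicGet l) l.length := by
  intro i
  simp [cyclicGet]

theorem exists_cyclicGet_eq {l : List Bool} {b : Bool} (hb : b ∈ l) :
    ∃ j < l.length, cyclicGet l j = b := by
  obtain ⟨j, hj, rfl⟩ := mem_iff_getElem.1 hb
  exact ⟨j, hj, by rw [cyclicGet, Nat.mod_eq_of_lt hj, getD_eq_getElem]⟩

theorem cyclicGet_rotate (l : List Bool) (k i : ℕ) :
    cyclicGet (l.rotate k) i = cyclicGet l (i + k) := by
  rcases Nat.eq_zero_or_pos l.length with hl | hl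
  · rw [eq_nil_of_length_eq_zero hl]; rfl
  · have hi : i % l.length < l.length := Nat.mod_lt i hl
    rw [cyclicGet, cyclicGet, getD_eq_getElem _ _ (by simpa using hi), getElem_rotate,
      getD_eq_getElem _ _ (Nat.mod_lt _ hl)]
    simp only [length_rotate, Nat.mod_add_mod]

theorem magnusDeleted_periodic (l : List Bool) :
    Function.Periodic (magnusDeleted l) l.length := by
  intro i
  have hprev : i + l.length + l.length - 1 = i + l.length - 1 + l.length := by omega
  simp only [magnusDeleted, hprev, Nat.add_right_comm i l.length 1, cyclicGet_periodic l _]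

theorem magnusDeleted_rotate (l : List Bool) (k i : ℕ) :
    magnusDeleted (l.rotate k) i = magnusDeleted l (i + k) := by
  rcases Nat.eq_zero_or_pos l.length with hl | hl
  · rw [eq_nil_of_length_eq_zero hl]; rfl
  · have hprev : i + l.length - 1 + k = i + k + l.length - 1 := by omega
    simp only [magnusDeleted, cyclicGet_rotate, length_rotate, hprev, Nat.add_right_comm i 1 k]

theorem magnusD_rotate (l : List Bool) (k : ℕ) : magnusD (l.rotate k) ~r magnusD l := by
  have hshift : magnusD (l.rotate k) =
      (((range l.length).map (fun i => (i + k) % l.length)).filter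
        (fun i => !magnusDeleted l i)).map (cyclicGet l) := by
    simp only [magnusD, length_rotate, filter_map, map_map, Function.comp_def,
      (magnusDeleted_periodic l).map_mod_nat, (cyclicGet_periodic l).map_mod_nat,
      magnusDeleted_rotate, funext (cyclicGet_rotate l k)]
  rw [hshift, map_range_add_mod]
  exact ((IsRotated.forall _ k).filter _).map _

theorem isRotated_magnusD {l l' : List Bool} (h : l ~r l') : magnusD l ~r magnusD l' := by
  obtain ⟨k, rfl⟩ := h
  exact (magnusD_rotate l k).symm

theorem isRotated_iterate_magnusD {l l' : List Bool} (h : l ~r l') (m : ℕ) :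
    magnusD^[m] l ~r magnusD^[m] l' := by
  induction m generalizing l l' with
  | zero => exact h
  | succ m ih => exact ih (isRotated_magnusD h)

theorem isPowerShape_iff_of_isRotated {l l' : List Bool} (h : l ~r l') :
    IsPowerShape l ↔ IsPowerShape l' := by
  simp only [IsPowerShape, h.mem_iff]

theorem exists_magnusDeleted {l : List Bool} (h : ¬ IsPowerShape l) :
    ∃ i < l.length, magnusDeleted l i = true := by
  simp only [IsPowerShape, not_or, not_forall, Bool.not_eq_true, Bool.not_eq_false] at h
  obtain ⟨⟨_, hfalse, rfl⟩, ⟨_, htrue, rfl⟩⟩ := h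
  obtain ⟨j, hj, hj_true⟩ := exists_cyclicGet_eq htrue
  obtain ⟨k, -, hk_false⟩ := exists_cyclicGet_eq hfalse
  obtain ⟨i, hi, hi_succ⟩ := Nat.exists_and_not_succ_of_le (P := fun i => cyclicGet l i = true)
    (show j ≤ k + l.length by omega) hj_true (by simp [cyclicGet_periodic l k, hk_false])
  refine ⟨i % l.length, Nat.mod_lt i (by omega), ?_⟩
  rw [(magnusDeleted_periodic l).map_mod_nat]
  simp only [Bool.not_eq_true] at hi_succ
  simp [magnusDeleted, hi, hi_succ]

theorem length_magnusD_lt {l : List Bool} (h : ¬ IsPowerShape l) :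
    (magnusD l).length < l.length := by
  obtain ⟨i, hi, hdel⟩ := exists_magnusDeleted h
  simpa [magnusD] using
    length_filter_lt_length_iff_exists.2 ⟨i, mem_range.2 hi, by simp [hdel]⟩

theorem exists_iterate_magnusD_isPowerShape (l : List Bool) :
    ∃ m, IsPowerShape (magnusD^[m] l) := by
  by_cases hl : IsPowerShape l
  · exact ⟨0, hl⟩
  · obtain ⟨m, hm⟩ := exists_iterate_magnusD_isPowerShape (magnusD l)
    exact ⟨m + 1, hm⟩
termination_by l.length
decreasing_by exact length_magnusD_lt hl

/-- For every t-shape `T` there exists an integer `m ≥ 0` such that the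
`m`-th iterated Magnus derivative `D^m(T)` is a power shape `t^q` for some `q ∈ ℤ`.
Consequently the complexity of every t-shape is well defined (in particular it is
independent of the chosen representative of the cyclic word). -/
theorem magnus_derivative_reaches_power_shape :
    (∀ l : List Bool, ∃ m : ℕ, IsPowerShape (magnusD^[m] l)) ∧
      (∀ l l' : List Bool, ShapeRotEquiv l l' →
        shapeComplexity l = shapeComplexity l') := by
  refine ⟨exists_iterate_magnusD_isPowerShape, fun l l' h => ?_⟩
  simp only [shapeComplexity,
    fun m => isPowerShape_iff_of_isRotated (isRotated_iterate_magnusD (h : l ~r l') m)]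
end

section
/- No t-shape which is a proper power is amenable. That is, if a t-shape T can be represented by a sequence of the form u^n (the sequence u concatenated with itself n times) for some nonempty finite sequence u with entries in {+1,−1} and some integer n ≥ 2, then T is not amenable. -/
/-- The root of a t-shape of complexity `m ≥ 1`: its `(m−1)`-st Magnus derivative. -/
noncomputable def shapeRoot (l : List Bool) : List Bool :=
  magnusD^[shapeComplexity l - 1] l

/-- The inverse of a t-shape (invert all letters and reverse the order). -/
def shapeInv (l : List Bool) : List Bool :=
  (l.map (fun b => !b)).reverse

/-- A representative of the one-clump shape `t^p (t t⁻¹)^q`. -/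
def oneClumpList (p q : ℕ) : List Bool :=
  List.replicate p true ++ (List.replicate q [true, false]).flatten

/-- A one-clump shape: a t-shape of the form `t^p (t t⁻¹)^q` (`p, q > 0`) or its inverse. -/
def IsOneClumpShape (l : List Bool) : Prop :=
  ∃ p q : ℕ, 0 < p ∧ 0 < q ∧
    (ShapeRotEquiv l (oneClumpList p q) ∨ ShapeRotEquiv l (shapeInv (oneClumpList p q)))

/-- A t-shape is amenable if it has complexity at least 1 and its root is either
`t t⁻¹` or a one-clump shape. -/
def IsAmenableShape (l : List Bool) : Prop :=
  1 ≤ shapeComplexity l ∧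
    (ShapeRotEquiv (shapeRoot l) [true, false] ∨ IsOneClumpShape (shapeRoot l))

namespace ProperPowerAux

/-- Cyclic periodicity: `l` has length `n * L` and its cyclic entries are `L`-periodic. -/
def Per (n : ℕ) (l : List Bool) : Prop :=
  ∃ L, l.length = n * L ∧ ∀ i, cyclicGet l (i + L) = cyclicGet l i

lemma cyclicGet_add_length (l : List Bool) (i : ℕ) :
    cyclicGet l (i + l.length) = cyclicGet l i := by
  unfold cyclicGet
  rw [Nat.add_mod_right]

lemma cyclicGet_rotate (l : List Bool) (k i : ℕ) :
    cyclicGet (l.rotate k) i = cyclicGet l (i + k) := by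
  rcases eq_or_ne l [] with rfl | h
  · simp [cyclicGet]
  · have hlen : 0 < l.length := List.length_pos_iff.2 h
    unfold cyclicGet
    rw [List.length_rotate, List.getD_eq_getElem?_getD, List.getD_eq_getElem?_getD,
      List.getElem?_rotate (Nat.mod_lt _ hlen), Nat.mod_add_mod]

lemma length_flatten_replicate (n : ℕ) (u : List Bool) :
    ((List.replicate n u).flatten).length = n * u.length := by
  induction n with
  | zero => simp
  | succ n ih => rw [List.replicate_succ, List.flatten_cons, List.length_append, ih]; ring

lemma getD_flatten_replicate (u : List Bool) (d : Bool) :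
    ∀ (n i : ℕ), i < n * u.length →
      ((List.replicate n u).flatten).getD i d = u.getD (i % u.length) d := by
  intro n
  induction n with
  | zero => intro i h; omega
  | succ n ih =>
    intro i h
    rw [List.replicate_succ, List.flatten_cons]
    rcases lt_or_ge i u.length with hi | hi
    · rw [List.getD_append _ _ _ _ hi, Nat.mod_eq_of_lt hi]
    · rw [List.getD_append_right _ _ _ _ hi, ih (i - u.length) (by
        have h' : (n + 1) * u.length = n * u.length + u.length := by ring
        omega)]
      congr 1
      conv_rhs => rw [show i = (i - u.length) + u.length by omega, Nat.add_mod_right]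

lemma cyclicGet_flatten_replicate (n : ℕ) (u : List Bool) (hn : 0 < n) (hu : u ≠ [])
    (i : ℕ) :
    cyclicGet ((List.replicate n u).flatten) i = u.getD (i % u.length) true := by
  have hL : 0 < u.length := List.length_pos_iff.2 hu
  have hpos : 0 < n * u.length := Nat.mul_pos hn hL
  unfold cyclicGet
  rw [length_flatten_replicate,
    getD_flatten_replicate u true n _ (Nat.mod_lt _ hpos),
    Nat.mod_mod_of_dvd _ (dvd_mul_left u.length n)]

lemma per_flatten_replicate (n : ℕ) (u : List Bool) :
    Per n ((List.replicate n u).flatten) := by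
  rcases Nat.eq_zero_or_pos n with rfl | hn
  · exact ⟨0, by simp, fun i => rfl⟩
  rcases eq_or_ne u [] with rfl | hu
  · refine ⟨0, ?_, fun i => rfl⟩
    rw [length_flatten_replicate]; simp
  refine ⟨u.length, length_flatten_replicate n u, fun i => ?_⟩
  rw [cyclicGet_flatten_replicate n u hn hu, cyclicGet_flatten_replicate n u hn hu,
    Nat.add_mod_right]

lemma per_rotate {n : ℕ} {l : List Bool} (h : Per n l) (k : ℕ) : Per n (l.rotate k) := by
  obtain ⟨L, h1, h2⟩ := h
  refine ⟨L, by rw [List.length_rotate]; exact h1, fun i => ?_⟩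
  rw [cyclicGet_rotate, cyclicGet_rotate, show i + L + k = (i + k) + L by ring, h2]

lemma periodic_iterate {α : Type*} {g : ℕ → α} {L : ℕ} (hg : ∀ i, g (i + L) = g i) :
    ∀ (k i : ℕ), g (i + k * L) = g i := by
  intro k
  induction k with
  | zero => simp
  | succ k ih =>
    intro i
    rw [show i + (k + 1) * L = (i + k * L) + L by ring, hg, ih]

lemma filter_map_range_mul {α : Type*} (L : ℕ) (g : ℕ → Bool) (f : ℕ → α)
    (hg : ∀ i, g (i + L) = g i) (hf : ∀ i, f (i + L) = f i) :
    ∀ n, ((List.range (n * L)).filter g).map f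
      = (List.replicate n (((List.range L).filter g).map f)).flatten := by
  have hg' := periodic_iterate hg
  have hf' := periodic_iterate hf
  intro n
  induction n with
  | zero => simp
  | succ n ih =>
    have hgc : (g ∘ fun x => n * L + x) = g := by
      funext i; simp only [Function.comp_apply]; rw [Nat.add_comm, hg']
    have hfc : (f ∘ fun x => n * L + x) = f := by
      funext i; simp only [Function.comp_apply]; rw [Nat.add_comm, hf']
    rw [show (n + 1) * L = n * L + L by ring, List.range_add, List.filter_append,
      List.map_append, ih, List.filter_map, List.map_map, hgc, hfc,
      List.replicate_succ', List.flatten_append]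
    simp

lemma magnusDeleted_periodic {n L : ℕ} {l : List Bool} (hlen : l.length = n * L)
    (hper : ∀ i, cyclicGet l (i + L) = cyclicGet l i) (hl : l ≠ []) (i : ℕ) :
    magnusDeleted l (i + L) = magnusDeleted l i := by
  have hpos : 0 < l.length := List.length_pos_iff.2 hl
  unfold magnusDeleted
  rw [hper i, show i + L + 1 = (i + 1) + L by ring, hper (i + 1),
    show i + L + l.length - 1 = (i + l.length - 1) + L by omega, hper (i + l.length - 1)]

lemma per_magnusD {n : ℕ} {l : List Bool} (h : Per n l) : Per n (magnusD l) := by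
  obtain ⟨L, hlen, hper⟩ := h
  rcases eq_or_ne l [] with rfl | hl
  · refine ⟨0, ?_, fun i => rfl⟩
    simp [magnusD]
  · have key : magnusD l
        = (List.replicate n (((List.range L).filter (fun i => !magnusDeleted l i)).map
            (cyclicGet l))).flatten := by
      unfold magnusD
      rw [hlen]
      exact filter_map_range_mul L _ _
        (fun i => by rw [magnusDeleted_periodic hlen hper hl]) hper n
    rw [key]
    exact per_flatten_replicate n _

lemma per_iterate {n : ℕ} {l : List Bool} (h : Per n l) (m : ℕ) :
    Per n (magnusD^[m] l) := by
  induction m with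
  | zero => simpa
  | succ m ih => rw [Function.iterate_succ_apply']; exact per_magnusD ih

lemma length_shapeInv (l : List Bool) : (shapeInv l).length = l.length := by
  simp [shapeInv]

lemma shapeInv_shapeInv (l : List Bool) : shapeInv (shapeInv l) = l := by
  simp only [shapeInv, List.map_reverse, List.reverse_reverse, List.map_map]
  have h : ((fun b => !b) ∘ fun b : Bool => !b) = id := by funext b; simp
  rw [h, List.map_id]

lemma cyclicGet_shapeInv (l : List Bool) (hl : l ≠ []) (i : ℕ) :
    cyclicGet (shapeInv l) i = !cyclicGet l (l.length - 1 - i % l.length) := by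
  have hpos : 0 < l.length := List.length_pos_iff.2 hl
  have ha : i % l.length < l.length := Nat.mod_lt _ hpos
  have hb : l.length - 1 - i % l.length < l.length := by omega
  unfold cyclicGet
  rw [length_shapeInv, Nat.mod_eq_of_lt hb]
  rw [List.getD_eq_getElem (shapeInv l) true (by rw [length_shapeInv]; exact ha),
    List.getD_eq_getElem l true hb]
  unfold shapeInv
  rw [List.getElem_reverse, List.getElem_map]
  congr 2
  rw [List.length_map]

lemma per_shapeInv {n : ℕ} {l : List Bool} (h : Per n l) : Per n (shapeInv l) := by
  obtain ⟨L, hlen, hper⟩ := h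
  rcases eq_or_ne l [] with rfl | hl
  · exact ⟨0, by simp [shapeInv], fun i => rfl⟩
  have hpos : 0 < l.length := List.length_pos_iff.2 hl
  have hL : 0 < L := by
    rcases Nat.eq_zero_or_pos L with rfl | h'
    · rw [Nat.mul_zero] at hlen; omega
    · exact h'
  have hn : 0 < n := by
    rcases Nat.eq_zero_or_pos n with rfl | h'
    · rw [Nat.zero_mul] at hlen; omega
    · exact h'
  have hLlen : L ≤ l.length := by
    rw [hlen]; exact Nat.le_mul_of_pos_left L hn
  refine ⟨L, by rw [length_shapeInv]; exact hlen, fun i => ?_⟩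
  rw [cyclicGet_shapeInv l hl, cyclicGet_shapeInv l hl]
  congr 1
  have haa : i % l.length < l.length := Nat.mod_lt _ hpos
  have hbb : (i + L) % l.length = (i % l.length + L) % l.length :=
    (Nat.mod_add_mod i l.length L).symm
  rw [hbb]
  rcases lt_or_ge (i % l.length + L) l.length with hcase | hcase
  · rw [Nat.mod_eq_of_lt hcase,
      show l.length - 1 - i % l.length = (l.length - 1 - (i % l.length + L)) + L by omega,
      hper]
  · have hblt : i % l.length + L - l.length < l.length := by omega
    rw [Nat.mod_eq_sub_mod hcase, Nat.mod_eq_of_lt hblt,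
      ← cyclicGet_add_length l (l.length - 1 - i % l.length),
      show (l.length - 1 - i % l.length) + l.length
        = (l.length - 1 - (i % l.length + L - l.length)) + L by omega,
      hper]

/-- Number of cyclic starts of true-runs of length at least 2. -/
def countT (l : List Bool) : ℕ :=
  ((List.range l.length).filter
    (fun i => cyclicGet l i && cyclicGet l (i + 1) && !cyclicGet l (i + l.length - 1))).length

lemma dvd_countT {n : ℕ} {l : List Bool} (h : Per n l) : n ∣ countT l := by
  obtain ⟨L, hlen, hper⟩ := h
  rcases eq_or_ne l [] with rfl | hl
  · simp [countT]
  have hpos : 0 < l.length := List.length_pos_iff.2 hl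
  have hg : ∀ i,
      (fun i => cyclicGet l i && cyclicGet l (i + 1) && !cyclicGet l (i + l.length - 1)) (i + L)
        = (fun i => cyclicGet l i && cyclicGet l (i + 1) && !cyclicGet l (i + l.length - 1)) i := by
    intro i
    simp only
    rw [hper i, show i + L + 1 = (i + 1) + L by ring, hper (i + 1),
      show i + L + l.length - 1 = (i + l.length - 1) + L by omega, hper (i + l.length - 1)]
  have key := filter_map_range_mul L
    (fun i => cyclicGet l i && cyclicGet l (i + 1) && !cyclicGet l (i + l.length - 1))
    (fun _ => true) hg (fun _ => rfl) n
  have h1 := congrArg List.length key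
  rw [List.length_map, length_flatten_replicate, List.length_map] at h1
  unfold countT
  rw [show List.range l.length = List.range (n * L) by rw [hlen]]
  exact ⟨_, h1⟩

lemma filter_range_length_eq_one {g : ℕ → Bool} :
    ∀ {N : ℕ} {a : ℕ}, a < N → g a = true → (∀ i, i < N → g i = true → i = a) →
      ((List.range N).filter g).length = 1 := by
  intro N
  induction N with
  | zero => intro a ha; omega
  | succ N ih =>
    intro a ha hga huniq
    rw [List.range_succ, List.filter_append, List.length_append]
    by_cases haN : a = N
    · have h0 : (List.range N).filter g = [] := by
        rw [List.filter_eq_nil_iff]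
        intro x hx hgx
        rw [List.mem_range] at hx
        have := huniq x (by omega) hgx
        omega
      rw [h0]
      subst haN
      simp [hga]
    · have ha' : a < N := by omega
      have hgN : ¬ g N = true := by
        intro h
        exact haN (huniq N (by omega) h).symm
      rw [ih ha' hga (fun i hi hgi => huniq i (by omega) hgi)]
      simp [hgN]

lemma length_oneClump (p q : ℕ) : (oneClumpList p q).length = p + 2 * q := by
  unfold oneClumpList
  rw [List.length_append, List.length_replicate, length_flatten_replicate]
  simp only [List.length_cons, List.length_nil]
  omega

lemma cyclicGet_oneClump (p q : ℕ) (hp : 0 < p) (hq : 0 < q) (i : ℕ) :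
    cyclicGet (oneClumpList p q) i
      = (decide (i % (p + 2 * q) < p) || decide ((i % (p + 2 * q) - p) % 2 = 0)) := by
  have hlen := length_oneClump p q
  have hpos : 0 < p + 2 * q := by omega
  unfold cyclicGet
  rw [hlen]
  set j := i % (p + 2 * q) with hjdef
  have hj : j < p + 2 * q := Nat.mod_lt _ hpos
  unfold oneClumpList
  rcases lt_or_ge j p with hcase | hcase
  · rw [List.getD_append _ _ _ _ (by rw [List.length_replicate]; exact hcase)]
    have h' : (List.replicate p true).getD j true = true := by
      rw [List.getD_eq_getElem _ _ (by rw [List.length_replicate]; exact hcase)]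
      simp
    rw [h']
    simp [hcase]
  · rw [List.getD_append_right _ _ _ _ (by rw [List.length_replicate]; exact hcase),
      List.length_replicate,
      getD_flatten_replicate [true, false] true q (j - p) (by
        simp only [List.length_cons, List.length_nil]
        omega)]
    rw [show [true, false].length = 2 from rfl]
    have h2 : (j - p) % 2 = 0 ∨ (j - p) % 2 = 1 := by omega
    rcases h2 with h2 | h2
    · have hv : [true, false].getD ((j - p) % 2) true = true := by rw [h2]; decide
      rw [hv]
      simp [h2]
    · have hv : [true, false].getD ((j - p) % 2) true = false := by rw [h2]; decide
      rw [hv]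
      simp [h2, show ¬ j < p by omega]

lemma countT_oneClump (p q : ℕ) (hp : 0 < p) (hq : 0 < q) :
    countT (oneClumpList p q) = 1 := by
  have hlen := length_oneClump p q
  have hpos : 0 < p + 2 * q := by omega
  unfold countT
  rw [hlen]
  apply filter_range_length_eq_one (a := 0) hpos
  · simp only [Bool.and_eq_true, Bool.not_eq_true']
    refine ⟨⟨?_, ?_⟩, ?_⟩
    · rw [cyclicGet_oneClump p q hp hq, Nat.zero_mod]
      simp only [Bool.or_eq_true, decide_eq_true_eq]
      omega
    · rw [cyclicGet_oneClump p q hp hq, Nat.mod_eq_of_lt (show 0 + 1 < p + 2 * q by omega)]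
      simp only [Bool.or_eq_true, decide_eq_true_eq]
      omega
    · rw [cyclicGet_oneClump p q hp hq,
        Nat.mod_eq_of_lt (show 0 + (p + 2 * q) - 1 < p + 2 * q by omega)]
      simp only [Bool.or_eq_false_iff, decide_eq_false_iff_not]
      omega
  · intro i hi hgi
    simp only [Bool.and_eq_true, Bool.not_eq_true'] at hgi
    obtain ⟨⟨h1, h2⟩, h3⟩ := hgi
    by_contra hi0
    have hi1 : 1 ≤ i := by omega
    rw [cyclicGet_oneClump p q hp hq, Nat.mod_eq_of_lt hi] at h1
    simp only [Bool.or_eq_true, decide_eq_true_eq] at h1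
    rw [cyclicGet_oneClump p q hp hq,
      show i + (p + 2 * q) - 1 = (i - 1) + (p + 2 * q) by omega, Nat.add_mod_right,
      Nat.mod_eq_of_lt (show i - 1 < p + 2 * q by omega)] at h3
    simp only [Bool.or_eq_false_iff, decide_eq_false_iff_not] at h3
    rw [cyclicGet_oneClump p q hp hq] at h2
    rcases lt_or_ge (i + 1) (p + 2 * q) with hcase | hcase
    · rw [Nat.mod_eq_of_lt hcase] at h2
      simp only [Bool.or_eq_true, decide_eq_true_eq] at h2
      omega
    · have hieq : i + 1 = p + 2 * q := by omega
      omega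

lemma not_per_oneClump {n p q : ℕ} (hn : 2 ≤ n) (hp : 0 < p) (hq : 0 < q) :
    ¬ Per n (oneClumpList p q) := by
  intro h
  have hdvd := dvd_countT h
  rw [countT_oneClump p q hp hq] at hdvd
  have := Nat.le_of_dvd one_pos hdvd
  omega

lemma not_per_tf {n : ℕ} (hn : 2 ≤ n) : ¬ Per n [true, false] := by
  rintro ⟨L, hlen, hper⟩
  have hlen2 : 2 = n * L := by simpa using hlen
  have hL2 : L ≤ 2 := Nat.le_of_dvd (by omega) ⟨n, by rw [Nat.mul_comm]; exact hlen2⟩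
  interval_cases L
  · omega
  · exact absurd (hper 0) (by decide)
  · omega

end ProperPowerAux


/-- No t-shape which is a proper power is amenable: if a t-shape can be
represented by a sequence of the form `u^n` (`u` a nonempty finite sequence of
letters, `n ≥ 2`), then it is not amenable. -/
theorem proper_power_shape_not_amenable (u : List Bool) (hu : u ≠ [])
    (n : ℕ) (hn : 2 ≤ n) (l : List Bool)
    (hl : ShapeRotEquiv l ((List.replicate n u).flatten)) :
    ¬ IsAmenableShape l := by
  rintro ⟨h1, h2⟩
  obtain ⟨k0, hk0⟩ := hl
  obtain ⟨k, hk⟩ := List.IsRotated.symm (⟨k0, hk0⟩ : l ~r ((List.replicate n u).flatten))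
  have hP : ProperPowerAux.Per n l := by
    rw [← hk]
    exact ProperPowerAux.per_rotate (ProperPowerAux.per_flatten_replicate n u) k
  have hroot : ProperPowerAux.Per n (shapeRoot l) :=
    ProperPowerAux.per_iterate hP _
  rcases h2 with hA | ⟨p, q, hp, hq, hB | hB⟩
  · obtain ⟨k2, hk2⟩ := hA
    have h := ProperPowerAux.per_rotate hroot k2
    rw [hk2] at h
    exact ProperPowerAux.not_per_tf hn h
  · obtain ⟨k2, hk2⟩ := hB
    have h := ProperPowerAux.per_rotate hroot k2
    rw [hk2] at h
    exact ProperPowerAux.not_per_oneClump hn hp hq h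
  · obtain ⟨k2, hk2⟩ := hB
    have h := ProperPowerAux.per_rotate hroot k2
    rw [hk2] at h
    have h2 := ProperPowerAux.per_shapeInv h
    rw [ProperPowerAux.shapeInv_shapeInv] at h2
    exact ProperPowerAux.not_per_oneClump hn hp hq h2
end

section
/- Let G be a group, let G*⟨s⟩ be the free product of G with the infinite cyclic group generated by s, and let ex : G*⟨s⟩ → ℤ be the unique homomorphism that is trivial on G and sends s to 1. Then the homomorphism from the free product ∗_{i∈ℤ} G_{(i)} of copies of G indexed by ℤ into G*⟨s⟩, defined on the i-th copy by g ↦ s^{−i} g s^{i}, is injective, and its image is exactly the kernel of ex. In particular the kernel of ex is the free product of the subgroups s^{−i} G s^{i}, i ∈ ℤ. -/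
/-!
We model the free product `G ∗ ⟨s⟩` as `Monoid.Coprod G (FreeGroup Unit)`, with
`s` the image of the generator of `FreeGroup Unit`, and `∗_{i∈ℤ} G` as
`Monoid.CoprodI (fun _ : ℤ => G)`.
-/

/-- The free product `G ∗ ⟨s⟩`. -/
abbrev GroupWithS (G : Type*) [Group G] := Monoid.Coprod G (FreeGroup Unit)

/-- The distinguished generator `s` of `G ∗ ⟨s⟩`. -/
def sGen (G : Type*) [Group G] : GroupWithS G := Monoid.Coprod.inr (FreeGroup.of ())

/-- The exponent sum homomorphism `ex : G ∗ ⟨s⟩ → ℤ`: the unique homomorphism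
that is trivial on `G` and sends `s` to `1` (written multiplicatively,
with values in `Multiplicative ℤ`). -/
def exHom (G : Type*) [Group G] : GroupWithS G →* Multiplicative ℤ :=
  Monoid.Coprod.lift 1 (FreeGroup.lift fun _ => Multiplicative.ofAdd (1 : ℤ))

/-- The homomorphism `G → G ∗ ⟨s⟩`, `g ↦ s^{−i} g s^{i}`. -/
def conjEmbedding (G : Type*) [Group G] (i : ℤ) : G →* GroupWithS G :=
  (MulAut.conj ((sGen G) ^ (-i))).toMonoidHom.comp Monoid.Coprod.inl

/-- The canonical homomorphism `∗_{i∈ℤ} G_{(i)} → G ∗ ⟨s⟩` induced on the free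
product of copies of `G` indexed by `ℤ` by the maps `g ↦ s^{−i} g s^{i}`. -/
def kernelHom (G : Type*) [Group G] : Monoid.CoprodI (fun _ : ℤ => G) →* GroupWithS G :=
  Monoid.CoprodI.lift (fun i => conjEmbedding G i)

section Aux
variable (G : Type*) [Group G]

abbrev KK := Monoid.CoprodI (fun _ : ℤ => G)

abbrev ofi (i : ℤ) : G →* KK G := @Monoid.CoprodI.of ℤ (fun _ => G) _ i

/-- shift: `of_i g ↦ of_{i-n} g` -/
def shiftHom (n : ℤ) : KK G →* KK G :=
  Monoid.CoprodI.lift (fun i => ofi G (i - n))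

@[simp] lemma shiftHom_of (n i : ℤ) (g : G) :
    shiftHom G n (ofi G i g) = ofi G (i - n) g :=
  Monoid.CoprodI.lift_of _ _

lemma shiftHom_comp (m n : ℤ) : (shiftHom G m).comp (shiftHom G n) = shiftHom G (n + m) := by
  apply Monoid.CoprodI.ext_hom
  intro i; ext g
  show shiftHom G m (shiftHom G n (ofi G i g)) = shiftHom G (n + m) (ofi G i g)
  simp [sub_sub]

lemma shiftHom_zero : shiftHom G 0 = MonoidHom.id _ := by
  apply Monoid.CoprodI.ext_hom
  intro i; ext g
  show shiftHom G 0 (ofi G i g) = ofi G i g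
  simp

def shiftEquiv' (n : ℤ) : KK G ≃* KK G :=
  MonoidHom.toMulEquiv (shiftHom G n) (shiftHom G (-n))
    (by rw [shiftHom_comp]; simpa using shiftHom_zero G)
    (by rw [shiftHom_comp]; simpa using shiftHom_zero G)

def phi : Multiplicative ℤ →* MulAut (KK G) where
  toFun n := shiftEquiv' G (Multiplicative.toAdd n)
  map_one' := by
    ext x
    show shiftHom G 0 x = x
    rw [shiftHom_zero]; rfl
  map_mul' m n := by
    ext x
    show shiftHom G (Multiplicative.toAdd m + Multiplicative.toAdd n) x
      = shiftHom G (Multiplicative.toAdd m) (shiftHom G (Multiplicative.toAdd n) x)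
    rw [← MonoidHom.comp_apply, shiftHom_comp, add_comm]

lemma phi_apply (n : ℤ) (x : KK G) :
    phi G (Multiplicative.ofAdd n) x = shiftHom G n x := rfl

abbrev SP := SemidirectProduct (KK G) (Multiplicative ℤ) (phi G)

lemma kernelHom_of (i : ℤ) (g : G) :
    kernelHom G (ofi G i g) = (sGen G ^ i)⁻¹ * Monoid.Coprod.inl g * sGen G ^ i := by
  rw [kernelHom, Monoid.CoprodI.lift_of]
  show (MulAut.conj (sGen G ^ (-i))) (Monoid.Coprod.inl g) = _
  rw [MulAut.conj_apply, zpow_neg, inv_inv]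

def sPow : Multiplicative ℤ →* GroupWithS G := zpowersHom (GroupWithS G) (sGen G)

lemma sPow_apply (n : ℤ) : sPow G (Multiplicative.ofAdd n) = sGen G ^ n := rfl

def fwd : SP G →* GroupWithS G :=
  SemidirectProduct.lift (kernelHom G) (sPow G) (by
    intro n
    apply Monoid.CoprodI.ext_hom; intro i; ext g
    show kernelHom G (shiftHom G (Multiplicative.toAdd n) (ofi G i g))
      = sPow G n * kernelHom G (ofi G i g) * (sPow G n)⁻¹
    rw [shiftHom_of, kernelHom_of, kernelHom_of]
    have : sPow G n = sGen G ^ (Multiplicative.toAdd n) := rfl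
    rw [this]
    group)

@[simp] lemma fwd_inl (k : KK G) : fwd G (SemidirectProduct.inl k) = kernelHom G k :=
  SemidirectProduct.lift_inl _ _ _ _

@[simp] lemma fwd_inr (n : Multiplicative ℤ) : fwd G (SemidirectProduct.inr n) = sPow G n :=
  SemidirectProduct.lift_inr _ _ _ _

def bwd : GroupWithS G →* SP G :=
  Monoid.Coprod.lift (SemidirectProduct.inl.comp (ofi G 0))
    (FreeGroup.lift fun _ => SemidirectProduct.inr (Multiplicative.ofAdd (1 : ℤ)))

@[simp] lemma bwd_inl (g : G) :
    bwd G (Monoid.Coprod.inl g) = SemidirectProduct.inl (ofi G 0 g) := by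
  simp [bwd]

@[simp] lemma bwd_s : bwd G (sGen G) = SemidirectProduct.inr (Multiplicative.ofAdd (1 : ℤ)) := by
  simp [bwd, sGen]

lemma fwd_comp_bwd : (fwd G).comp (bwd G) = MonoidHom.id _ := by
  apply Monoid.Coprod.hom_ext
  · ext g
    simp only [MonoidHom.comp_apply, MonoidHom.id_apply, bwd_inl, fwd_inl, kernelHom_of]
    simp
  · refine FreeGroup.ext_hom _ _ fun u => ?_
    cases u
    show fwd G (bwd G (sGen G)) = sGen G
    rw [bwd_s, fwd_inr, sPow_apply, zpow_one]

lemma rightHom_comp_bwd : SemidirectProduct.rightHom.comp (bwd G) = exHom G := by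
  apply Monoid.Coprod.hom_ext
  · ext g
    simp [exHom]
  · refine FreeGroup.ext_hom _ _ fun u => ?_
    cases u
    show SemidirectProduct.rightHom (bwd G (sGen G)) = exHom G (sGen G)
    rw [bwd_s]
    simp [exHom, sGen]

lemma bwd_comp_fwd : (bwd G).comp (fwd G) = MonoidHom.id _ := by
  apply SemidirectProduct.hom_ext
  · apply Monoid.CoprodI.ext_hom; intro i
    refine MonoidHom.ext fun g => ?_
    show bwd G (fwd G (SemidirectProduct.inl (ofi G i g))) = SemidirectProduct.inl (ofi G i g)
    rw [fwd_inl, kernelHom_of, map_mul, map_mul, map_inv, map_zpow, bwd_s, bwd_inl]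
    have h1 : ((SemidirectProduct.inr (Multiplicative.ofAdd (1:ℤ)) : SP G)) ^ i
        = SemidirectProduct.inr ((Multiplicative.ofAdd (1:ℤ)) ^ i) := (map_zpow _ _ _).symm
    rw [h1, ← map_inv, ← SemidirectProduct.inl_aut_inv]
    congr 1
    have h2 : ((Multiplicative.ofAdd (1:ℤ)) ^ i) = Multiplicative.ofAdd i := by
      rw [← ofAdd_zsmul]; simp
    rw [h2]
    show (phi G (Multiplicative.ofAdd i))⁻¹ (ofi G 0 g) = ofi G i g
    rw [← map_inv, ← ofAdd_neg, phi_apply]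
    simp
  · refine MonoidHom.ext_mint ?_
    show bwd G (fwd G (SemidirectProduct.inr (Multiplicative.ofAdd 1)))
      = SemidirectProduct.inr (Multiplicative.ofAdd 1)
    rw [fwd_inr, sPow_apply, zpow_one, bwd_s]

end Aux

/-- the homomorphism `∗_{i∈ℤ} G_{(i)} → G ∗ ⟨s⟩` defined on the `i`-th copy
by `g ↦ s^{−i} g s^{i}` is injective, and its image is exactly the kernel of the exponent
sum homomorphism `ex`.  In particular `ker ex` is the free product of the subgroups
`s^{−i} G s^{i}`, `i ∈ ℤ`. -/
theorem kernel_of_exponent_sum_is_free_product (G : Type*) [Group G] :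
    Function.Injective (kernelHom G) ∧ (kernelHom G).range = (exHom G).ker := by
  have hfb := fwd_comp_bwd G
  have hbf := bwd_comp_fwd G
  have hleft : Function.LeftInverse (bwd G) (fwd G) := fun x => DFunLike.congr_fun hbf x
  have hright : Function.RightInverse (bwd G) (fwd G) := fun x => DFunLike.congr_fun hfb x
  have hker : kernelHom G = (fwd G).comp SemidirectProduct.inl := by
    ext x
    simp
  constructor
  · rw [hker]
    exact hleft.injective.comp SemidirectProduct.inl_injective
  · ext x
    constructor
    · rintro ⟨k, rfl⟩
      have h0 : exHom G (kernelHom G k) = SemidirectProduct.rightHom (bwd G (kernelHom G k)) := by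
        rw [← rightHom_comp_bwd]; rfl
      rw [MonoidHom.mem_ker, h0, hker]
      show SemidirectProduct.rightHom (bwd G (fwd G (SemidirectProduct.inl k))) = 1
      rw [hleft (SemidirectProduct.inl k)]
      simp
    · intro hx
      have h1 : SemidirectProduct.rightHom (bwd G x) = 1 := by
        rw [← MonoidHom.comp_apply, rightHom_comp_bwd]; exact hx
      have h2 : bwd G x ∈ (SemidirectProduct.inl : KK G →* SP G).range := by
        rw [SemidirectProduct.range_inl_eq_ker_rightHom]; exact h1
      obtain ⟨k, hk⟩ := h2
      refine ⟨k, ?_⟩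
      rw [hker]
      show fwd G (SemidirectProduct.inl k) = x
      rw [hk, hright x]
end

section
/- Let P be the group with presentation ⟨a, b, c, t ∣ b² = 1, c² = 1, a⁻¹ b a = c, t a t b t⁻¹ c = 1⟩. Then the elements t b t⁻¹ and a⁻¹ t⁻¹ are both nontrivial in P; indeed there is a homomorphism from P to the isometry group of the Euclidean plane sending a, b, c to the reflection across a line ℓ₁ and t to the reflection across a line ℓ₂ meeting ℓ₁ at angle π/3, under which a⁻¹ t⁻¹ maps to a rotation of order 3 and t b t⁻¹ maps to a reflection. -/
/-!
Send `a, b, c` to the reflection `s` in the line `ℝ u` and `t` to the reflection `r` in `ℝ v`,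
where `u, v` are unit vectors with `⟪u, v⟫ = 1/2`. Since `s v = u - v = -(r u)`, both `s r s`
and `r s r` are the reflection in `ℝ (u - v)`: this braid relation gives `(r s)³ = 1`, which is
the image of the relator `t a t b t⁻¹ c`. As `s ≠ r`, the image `s r` of `a⁻¹ t⁻¹` has order
`3`, and the image `r s r` of `t b t⁻¹` is a reflection, so neither element is trivial.
-/

/-- The generators `a, b, c, t`. -/
inductive PGen | a | b | c | t

/-- The relators `b²`, `c²`, `a⁻¹ b a c⁻¹`, `t a t b t⁻¹ c`. -/
def PRels : Set (FreeGroup PGen) :=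
  {FreeGroup.of PGen.b ^ 2,
   FreeGroup.of PGen.c ^ 2,
   (FreeGroup.of PGen.a)⁻¹ * FreeGroup.of PGen.b * FreeGroup.of PGen.a *
     (FreeGroup.of PGen.c)⁻¹,
   FreeGroup.of PGen.t * FreeGroup.of PGen.a * FreeGroup.of PGen.t *
     FreeGroup.of PGen.b * (FreeGroup.of PGen.t)⁻¹ * FreeGroup.of PGen.c}

/-- The group `P = ⟨a, b, c, t ∣ b² = 1, c² = 1, a⁻¹ba = c, tatbt⁻¹c = 1⟩`. -/
abbrev PGroup : Type := PresentedGroup PRels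

/-- The images of the generators in `P`. -/
def pOf (x : PGen) : PGroup := PresentedGroup.of x

/-- The Euclidean plane. -/
abbrev EPlane : Type := EuclideanSpace ℝ (Fin 2)

/-- A line in the Euclidean plane: a nonempty affine subspace with one-dimensional
direction. -/
def IsLine (ℓ : AffineSubspace ℝ EPlane) : Prop :=
  (ℓ : Set EPlane).Nonempty ∧ Module.finrank ℝ ℓ.direction = 1

/-- Reflection across an affine subspace, as an element of the isometry group of
the plane. -/
noncomputable def reflIso (ℓ : AffineSubspace ℝ EPlane) (hn : Nonempty ℓ)
    (ho : Submodule.HasOrthogonalProjection ℓ.direction) : EPlane ≃ᵢ EPlane :=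
  haveI := hn
  haveI := ho
  (EuclideanGeometry.reflection ℓ).toIsometryEquiv

open Submodule EuclideanGeometry
open scoped RealInnerProductSpace

section
variable {V : Type*} [NormedAddCommGroup V] [InnerProductSpace ℝ V]

theorem Submodule.zero_mem_toAffineSubspace (K : Submodule ℝ V) :
    (0 : V) ∈ (K : AffineSubspace ℝ V) :=
  mem_toAffineSubspace.2 K.zero_mem

instance Submodule.nonempty_toAffineSubspace (K : Submodule ℝ V) :
    Nonempty (K : AffineSubspace ℝ V) :=
  ⟨⟨0, K.zero_mem_toAffineSubspace⟩⟩

instance Submodule.hasOrthogonalProjection_toAffineSubspace_direction (K : Submodule ℝ V)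
    [K.HasOrthogonalProjection] : (K : AffineSubspace ℝ V).direction.HasOrthogonalProjection := by
  rw [toAffineSubspace_direction]; infer_instance

theorem Submodule.mem_span_singleton_toAffineSubspace_direction (u : V) :
    u ∈ (ℝ ∙ u).toAffineSubspace.direction := by
  rw [toAffineSubspace_direction]; exact mem_span_singleton_self u

theorem Submodule.reflection_congr {K K' : Submodule ℝ V} [K.HasOrthogonalProjection]
    [K'.HasOrthogonalProjection] (h : K = K') (x : V) : K.reflection x = K'.reflection x := by
  subst h; rfl

theorem EuclideanGeometry.reflection_toAffineSubspace (K : Submodule ℝ V)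
    [K.HasOrthogonalProjection] (x : V) :
    reflection (K : AffineSubspace ℝ V) x = K.reflection x := by
  rw [reflection_apply_of_mem _ x K.zero_mem_toAffineSubspace, vsub_eq_sub, sub_zero,
    vadd_eq_add, add_zero]
  exact reflection_congr (toAffineSubspace_direction K) x

theorem Submodule.span_singleton_sub_comm (u v : V) : (ℝ ∙ (u - v)) = ℝ ∙ (v - u) := by
  rw [← neg_sub, ← Set.neg_singleton, span_neg]

variable {u v : V}

theorem reflection_span_singleton_of_inner_eq_half (hu : ‖u‖ = 1) (huv : ⟪u, v⟫ = 1 / 2) :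
    (ℝ ∙ u).reflection v = u - v := by
  rw [reflection_singleton_apply, huv, hu]; module

theorem reflection_span_singleton_conj_of_inner_eq_half (hu : ‖u‖ = 1)
    (huv : ⟪u, v⟫ = 1 / 2) (x : V) :
    (ℝ ∙ u).reflection ((ℝ ∙ v).reflection ((ℝ ∙ u).reflection x)) =
      (ℝ ∙ (u - v)).reflection x := by
  have hmap : (ℝ ∙ v).map ((ℝ ∙ u).reflection.toLinearEquiv : V →ₗ[ℝ] V) =
      ℝ ∙ (u - v) := by
    rw [Submodule.map_span, Set.image_singleton]
    exact congrArg (fun w => ℝ ∙ w) (reflection_span_singleton_of_inner_eq_half hu huv)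
  rw [← reflection_congr hmap, reflection_map_apply, Submodule.reflection_symm]

theorem sub_ne_zero_of_inner_eq_half (hu : ‖u‖ = 1) (huv : ⟪u, v⟫ = 1 / 2) :
    u - v ≠ 0 := by
  intro h
  rw [sub_eq_zero.1 h, real_inner_self_eq_norm_sq, ← sub_eq_zero.1 h, hu] at huv
  norm_num at huv

theorem angle_eq_pi_div_three_of_inner_eq_half (hu : ‖u‖ = 1) (hv : ‖v‖ = 1)
    (huv : ⟪u, v⟫ = 1 / 2) : InnerProductGeometry.angle u v = Real.pi / 3 := by
  rw [InnerProductGeometry.angle, huv, hu, hv, mul_one, div_one, ← Real.cos_pi_div_three]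
  exact Real.arccos_cos (by positivity) (by linarith [Real.pi_pos])

end

section
variable {G : Type*} [Group G] {s t : G}

theorem pow_three_eq_one_of_braid (hs : s * s = 1) (ht : t * t = 1)
    (hst : s * t * s = t * s * t) : (s * t) ^ 3 = 1 := by
  rw [show (s * t) ^ 3 = s * t * s * (t * s * t) by
    simp only [pow_succ, pow_zero, one_mul, mul_assoc], ← hst]
  simp only [mul_assoc]
  rw [← mul_assoc s s, hs, one_mul, ← mul_assoc t t, ht, one_mul, hs]

theorem mul_ne_one_of_ne (ht : t * t = 1) (hne : s ≠ t) : s * t ≠ 1 := fun h =>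
  hne (by rw [mul_eq_one_iff_eq_inv.1 h, inv_eq_of_mul_eq_one_left ht])

theorem orderOf_mul_eq_three_of_braid (hs : s * s = 1) (ht : t * t = 1)
    (hst : s * t * s = t * s * t) (hne : s ≠ t) : orderOf (s * t) = 3 :=
  orderOf_eq_prime (pow_three_eq_one_of_braid hs ht hst) (mul_ne_one_of_ne ht hne)

theorem ne_one_of_braid (ht : t * t = 1) (hst : s * t * s = t * s * t) (hne : s ≠ t) :
    s ≠ 1 := by
  rintro rfl
  simp only [one_mul, mul_one, ht] at hst
  exact hne hst.symm

end

namespace PGroup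

variable {G : Type*} [Group G] {s t : G}

def genImage (s t : G) : PGen → G
  | .a | .b | .c => s
  | .t => t

theorem genImage_rels (hs : s * s = 1) (ht : t * t = 1) (hst : s * t * s = t * s * t) :
    ∀ r ∈ PRels, FreeGroup.lift (genImage s t) r = 1 := by
  have ht' : t⁻¹ = t := inv_eq_of_mul_eq_one_left ht
  rintro r (rfl | rfl | rfl | rfl) <;>
    simp only [map_mul, map_inv, FreeGroup.lift_apply_of, genImage, pow_two]
  · exact hs
  · exact hs
  · group
  -- `t a t b t⁻¹ c` maps to `(t s)³`
  · rw [ht', ← pow_three_eq_one_of_braid ht hs hst.symm]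
    simp only [pow_succ, pow_zero, one_mul, mul_assoc]

def lift (hs : s * s = 1) (ht : t * t = 1) (hst : s * t * s = t * s * t) : PGroup →* G :=
  PresentedGroup.toGroup (genImage_rels hs ht hst)

theorem lift_pOf (hs : s * s = 1) (ht : t * t = 1) (hst : s * t * s = t * s * t) (x : PGen) :
    lift hs ht hst (pOf x) = genImage s t x :=
  PresentedGroup.toGroup.of _

theorem lift_inv_a_mul_inv_t (hs : s * s = 1) (ht : t * t = 1) (hst : s * t * s = t * s * t) :
    lift hs ht hst ((pOf .a)⁻¹ * (pOf .t)⁻¹) = s * t := by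
  rw [map_mul, map_inv, map_inv, lift_pOf, lift_pOf]
  exact congrArg₂ (· * ·) (inv_eq_of_mul_eq_one_left hs) (inv_eq_of_mul_eq_one_left ht)

theorem lift_t_mul_b_mul_inv_t (hs : s * s = 1) (ht : t * t = 1) (hst : s * t * s = t * s * t) :
    lift hs ht hst (pOf .t * pOf .b * (pOf .t)⁻¹) = t * s * t⁻¹ := by
  rw [map_mul, map_mul, map_inv, lift_pOf, lift_pOf]
  rfl

end PGroup

noncomputable def reflIsoSpan (u : EPlane) : EPlane ≃ᵢ EPlane :=
  reflIso (ℝ ∙ u).toAffineSubspace inferInstance inferInstance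

section
variable {u v : EPlane}

theorem reflIsoSpan_apply (u x : EPlane) : reflIsoSpan u x = (ℝ ∙ u).reflection x :=
  reflection_toAffineSubspace _ x

theorem reflIsoSpan_mul_self (u : EPlane) : reflIsoSpan u * reflIsoSpan u = 1 :=
  IsometryEquiv.ext fun x => by
    rw [IsometryEquiv.mul_apply, reflIsoSpan_apply, reflIsoSpan_apply,
      Submodule.reflection_reflection, IsometryEquiv.coe_one, id_eq]

theorem reflIsoSpan_conj (hu : ‖u‖ = 1) (huv : ⟪u, v⟫ = 1 / 2) :
    reflIsoSpan u * reflIsoSpan v * reflIsoSpan u = reflIsoSpan (u - v) :=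
  IsometryEquiv.ext fun x => by
    rw [IsometryEquiv.mul_apply, IsometryEquiv.mul_apply, reflIsoSpan_apply, reflIsoSpan_apply,
      reflIsoSpan_apply, reflIsoSpan_apply]
    exact reflection_span_singleton_conj_of_inner_eq_half hu huv x

theorem reflIsoSpan_braid (hu : ‖u‖ = 1) (hv : ‖v‖ = 1) (huv : ⟪u, v⟫ = 1 / 2) :
    reflIsoSpan u * reflIsoSpan v * reflIsoSpan u =
      reflIsoSpan v * reflIsoSpan u * reflIsoSpan v := by
  rw [reflIsoSpan_conj hu huv, reflIsoSpan_conj hv (real_inner_comm u v ▸ huv)]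
  exact IsometryEquiv.ext fun x => by
    rw [reflIsoSpan_apply, reflIsoSpan_apply, reflection_congr (span_singleton_sub_comm u v)]

theorem reflIsoSpan_ne (hu : ‖u‖ = 1) (hv : ‖v‖ = 1) (huv : ⟪u, v⟫ = 1 / 2) :
    reflIsoSpan u ≠ reflIsoSpan v := by
  intro h
  have hfix : u - v = v := by
    rw [← reflection_span_singleton_of_inner_eq_half hu huv, ← reflIsoSpan_apply, h,
      reflIsoSpan_apply, reflection_mem_subspace_eq_self (mem_span_singleton_self v)]
  have h2 : u = (2 : ℝ) • v := by rw [two_smul]; exact sub_eq_iff_eq_add.1 hfix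
  have := congrArg norm h2
  rw [norm_smul, hu, hv] at this
  norm_num at this

theorem isLine_span_singleton (hu : u ≠ 0) : IsLine (ℝ ∙ u).toAffineSubspace :=
  ⟨⟨0, zero_mem_toAffineSubspace _⟩,
    by rw [toAffineSubspace_direction, finrank_span_singleton hu]⟩

end

noncomputable def dir₁ : EPlane := !₂[1, 0]
noncomputable def dir₂ : EPlane := !₂[1 / 2, √3 / 2]

theorem norm_dir₁ : ‖dir₁‖ = 1 := by
  simp [dir₁, EuclideanSpace.norm_eq]

theorem norm_dir₂ : ‖dir₂‖ = 1 := by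
  norm_num [dir₂, EuclideanSpace.norm_eq, Fin.sum_univ_two, div_pow]

theorem inner_dir₁_dir₂ : ⟪dir₁, dir₂⟫ = 1 / 2 := by
  simp [dir₁, dir₂, PiLp.inner_apply, Fin.sum_univ_two]

theorem dir₁_ne_zero : dir₁ ≠ 0 := norm_ne_zero_iff.1 (norm_dir₁ ▸ one_ne_zero)

theorem dir₂_ne_zero : dir₂ ≠ 0 := norm_ne_zero_iff.1 (norm_dir₂ ▸ one_ne_zero)

/-- In `P = ⟨a, b, c, t ∣ b² = 1, c² = 1, a⁻¹ba = c, tatbt⁻¹c = 1⟩` the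
elements `t b t⁻¹` and `a⁻¹ t⁻¹` are nontrivial; indeed there is a homomorphism from `P`
to the isometry group of the Euclidean plane sending `a, b, c` to the reflection across a
line `ℓ₁` and `t` to the reflection across a line `ℓ₂` meeting `ℓ₁` at angle `π/3`, under
which `a⁻¹ t⁻¹` maps to a rotation of order `3` (an isometry of order `3` fixing a point)
and `t b t⁻¹` maps to a reflection (across some line). -/
theorem presented_group_elements_nontrivial :
    (pOf PGen.t * pOf PGen.b * (pOf PGen.t)⁻¹ ≠ 1) ∧
    ((pOf PGen.a)⁻¹ * (pOf PGen.t)⁻¹ ≠ 1) ∧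
    ∃ (ρ : PGroup →* (EPlane ≃ᵢ EPlane)) (ℓ₁ ℓ₂ : AffineSubspace ℝ EPlane)
      (hn₁ : Nonempty ℓ₁) (ho₁ : Submodule.HasOrthogonalProjection ℓ₁.direction)
      (hn₂ : Nonempty ℓ₂) (ho₂ : Submodule.HasOrthogonalProjection ℓ₂.direction),
      IsLine ℓ₁ ∧ IsLine ℓ₂ ∧
      -- `ℓ₁` and `ℓ₂` meet
      (∃ p : EPlane, p ∈ ℓ₁ ∧ p ∈ ℓ₂) ∧
      -- at angle `π/3`
      (∃ v₁ v₂ : EPlane, v₁ ∈ ℓ₁.direction ∧ v₂ ∈ ℓ₂.direction ∧ v₁ ≠ 0 ∧ v₂ ≠ 0 ∧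
        InnerProductGeometry.angle v₁ v₂ = Real.pi / 3) ∧
      ρ (pOf PGen.a) = reflIso ℓ₁ hn₁ ho₁ ∧
      ρ (pOf PGen.b) = reflIso ℓ₁ hn₁ ho₁ ∧
      ρ (pOf PGen.c) = reflIso ℓ₁ hn₁ ho₁ ∧
      ρ (pOf PGen.t) = reflIso ℓ₂ hn₂ ho₂ ∧
      -- `a⁻¹ t⁻¹` maps to a rotation of order 3
      orderOf (ρ ((pOf PGen.a)⁻¹ * (pOf PGen.t)⁻¹)) = 3 ∧
      (∃ p : EPlane, ρ ((pOf PGen.a)⁻¹ * (pOf PGen.t)⁻¹) p = p) ∧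
      -- `t b t⁻¹` maps to a reflection
      (∃ (ℓ₃ : AffineSubspace ℝ EPlane) (hn₃ : Nonempty ℓ₃)
          (ho₃ : Submodule.HasOrthogonalProjection ℓ₃.direction),
          IsLine ℓ₃ ∧ ρ (pOf PGen.t * pOf PGen.b * (pOf PGen.t)⁻¹) = reflIso ℓ₃ hn₃ ho₃) := by
  have hs := reflIsoSpan_mul_self dir₁
  have ht := reflIsoSpan_mul_self dir₂
  have hst := reflIsoSpan_braid norm_dir₁ norm_dir₂ inner_dir₁_dir₂
  have hne := reflIsoSpan_ne norm_dir₁ norm_dir₂ inner_dir₁_dir₂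
  have hinner₂₁ : ⟪dir₂, dir₁⟫ = 1 / 2 := real_inner_comm dir₁ dir₂ ▸ inner_dir₁_dir₂
  set s := reflIsoSpan dir₁
  set t := reflIsoSpan dir₂
  set ρ := PGroup.lift hs ht hst
  have hρ_rot := PGroup.lift_inv_a_mul_inv_t hs ht hst
  have hρ_conj := PGroup.lift_t_mul_b_mul_inv_t hs ht hst
  have hρ_refl : t * s * t⁻¹ = reflIsoSpan (dir₂ - dir₁) := by
    rw [inv_eq_of_mul_eq_one_left ht]
    exact reflIsoSpan_conj norm_dir₂ hinner₂₁
  refine ⟨ne_one_of_map (f := ρ) ?_, ne_one_of_map (f := ρ) ?_, ρ, (ℝ ∙ dir₁).toAffineSubspace,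
    (ℝ ∙ dir₂).toAffineSubspace, inferInstance, inferInstance, inferInstance, inferInstance,
    isLine_span_singleton dir₁_ne_zero, isLine_span_singleton dir₂_ne_zero,
    ⟨0, zero_mem_toAffineSubspace _, zero_mem_toAffineSubspace _⟩,
    ⟨dir₁, dir₂, mem_span_singleton_toAffineSubspace_direction _,
      mem_span_singleton_toAffineSubspace_direction _, dir₁_ne_zero, dir₂_ne_zero,
      angle_eq_pi_div_three_of_inner_eq_half norm_dir₁ norm_dir₂ inner_dir₁_dir₂⟩,
    PGroup.lift_pOf _ _ _ .a, PGroup.lift_pOf _ _ _ .b, PGroup.lift_pOf _ _ _ .c,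
    PGroup.lift_pOf _ _ _ .t, ?_, ⟨0, ?_⟩,
    ⟨_, inferInstance, inferInstance,
      isLine_span_singleton (sub_ne_zero_of_inner_eq_half norm_dir₂ hinner₂₁),
      hρ_conj.trans hρ_refl⟩⟩
  · rw [hρ_conj, Ne, conj_eq_one_iff]
    exact ne_one_of_braid ht hst hne
  · rw [hρ_rot]
    exact mul_ne_one_of_ne ht hne
  · rw [hρ_rot]
    exact orderOf_mul_eq_three_of_braid hs ht hst hne
  · rw [hρ_rot, IsometryEquiv.mul_apply, reflIsoSpan_apply, reflIsoSpan_apply, map_zero, map_zero]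
end
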